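/- For the two-state chain, every real t with |t| < 1, and every integer k ≥ 1: G_0(t,k) = (1 - r t)(1 - p - r t)^k / (1 - (1-q)t)^{k+1} and G_1(t,k) = q (1 - r t)(1 - p - r t)^{k-1} / (1 - (1-q)t)^{k+1}, where r = 1 - p - q; in particular the defining series converge. -/

import Mathlib

open Matrix Finset

/-- Transition matrix of the two-state chain with parameters `p`, `q`. -/
noncomputable def twoStateP (p q : ℝ) : Matrix (Fin 2) (Fin 2) ℝ :=
  !![1 - p, p; q, 1 - q]

/-- `g2 p q i n k` is the probability that the two-state chain started at `i`
spends exactly `k` of the times `1,…,n` in state `0`. -/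
noncomputable def g2 (p q : ℝ) (i : Fin 2) (n k : ℕ) : ℝ :=
  ∑ x ∈ Finset.univ.filter
      (fun x : Fin (n + 1) → Fin 2 => x 0 = i ∧
        (Finset.univ.filter (fun m : Fin n => x m.succ = 0)).card = k),
    ∏ m : Fin n, twoStateP p q (x m.castSucc) (x m.succ)
lemma g2_eq (p q : ℝ) (i : Fin 2) (n k : ℕ) :
    g2 p q i n k = ∑ y : Fin (n+1) → Fin 2,
      if (y 0 = i ∧ (∑ m : Fin n, if y m.succ = 0 then 1 else 0) = k)
      then ∏ m : Fin n, twoStateP p q (y m.castSucc) (y m.succ) else 0 := by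
  rw [g2, Finset.sum_filter]
  simp_rw [Finset.card_filter]

lemma g2_succ_aux (p q : ℝ) (i : Fin 2) (n k : ℕ) :
    g2 p q i (n+1) k = ∑ y : Fin (n+1) → Fin 2,
      if ((if y 0 = 0 then 1 else 0) + (∑ m : Fin n, if y m.succ = 0 then 1 else 0) = k)
      then twoStateP p q i (y 0) * ∏ m : Fin n, twoStateP p q (y m.castSucc) (y m.succ)
      else 0 := by
  rw [g2_eq]
  rw [← Equiv.sum_comp (Fin.consEquiv (fun _ : Fin (n+2) => Fin 2))]
  rw [Fintype.sum_prod_type]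
  have key : ∀ j : Fin 2, ∀ y : Fin (n+1) → Fin 2,
      (if ((Fin.consEquiv (fun _ : Fin (n+2) => Fin 2)) (j, y) 0 = i ∧
          (∑ m : Fin (n+1), if (Fin.consEquiv (fun _ : Fin (n+2) => Fin 2)) (j, y) m.succ = 0 then 1 else 0) = k)
        then ∏ m : Fin (n+1), twoStateP p q
            ((Fin.consEquiv (fun _ : Fin (n+2) => Fin 2)) (j, y) m.castSucc)
            ((Fin.consEquiv (fun _ : Fin (n+2) => Fin 2)) (j, y) m.succ) else 0)
      = if j = i then
          ((if ((if y 0 = 0 then 1 else 0) + (∑ m : Fin n, if y m.succ = 0 then 1 else 0) = k)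
            then twoStateP p q i (y 0) * ∏ m : Fin n, twoStateP p q (y m.castSucc) (y m.succ) else 0))
        else 0 := by
    intro j y
    simp only [show ((Fin.consEquiv (fun _ : Fin (n+2) => Fin 2)) (j, y)) = Fin.cons j y from rfl,
      Fin.cons_zero, Fin.cons_succ]
    rw [Fin.sum_univ_succ, Fin.prod_univ_succ]
    simp only [← Fin.succ_castSucc, Fin.cons_succ,
      show Fin.castSucc (0 : Fin (n+1)) = 0 from rfl, Fin.cons_zero]
    by_cases hj : j = i
    · subst hj; simp
    · simp [hj]
  simp_rw [key]
  have swap : ∀ j : Fin 2, (∑ y : Fin (n+1) → Fin 2, if j = i then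
      ((if ((if y 0 = 0 then 1 else 0) + (∑ m : Fin n, if y m.succ = 0 then 1 else 0) = k)
        then twoStateP p q i (y 0) * ∏ m : Fin n, twoStateP p q (y m.castSucc) (y m.succ) else 0))
      else 0) = if j = i then (∑ y : Fin (n+1) → Fin 2,
      ((if ((if y 0 = 0 then 1 else 0) + (∑ m : Fin n, if y m.succ = 0 then 1 else 0) = k)
        then twoStateP p q i (y 0) * ∏ m : Fin n, twoStateP p q (y m.castSucc) (y m.succ) else 0)))
      else 0 := by
    intro j; split <;> simp
  simp_rw [swap]
  rw [Finset.sum_ite_eq' Finset.univ i, if_pos (Finset.mem_univ i)]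

lemma g2_succ_zero (p q : ℝ) (i : Fin 2) (n : ℕ) :
    g2 p q i (n+1) 0 = twoStateP p q i 1 * g2 p q 1 n 0 := by
  rw [g2_succ_aux, g2_eq, Finset.mul_sum]
  apply Finset.sum_congr rfl
  intro y _
  have h0 : y 0 = 0 ∨ y 0 = 1 := by omega
  rcases h0 with h0 | h0 <;> rw [h0] <;> simp [mul_ite, twoStateP]

lemma g2_succ_succ (p q : ℝ) (i : Fin 2) (n k : ℕ) :
    g2 p q i (n+1) (k+1) =
      twoStateP p q i 0 * g2 p q 0 n k + twoStateP p q i 1 * g2 p q 1 n (k+1) := by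
  rw [g2_succ_aux, g2_eq, g2_eq, Finset.mul_sum, Finset.mul_sum, ← Finset.sum_add_distrib]
  apply Finset.sum_congr rfl
  intro y _
  have h0 : y 0 = 0 ∨ y 0 = 1 := by omega
  rcases h0 with h0 | h0 <;> rw [h0]
  · have : ((if (0:Fin 2) = 0 then 1 else 0) + (∑ m : Fin n, if y m.succ = 0 then 1 else 0) = k + 1)
        ↔ ((∑ m : Fin n, if y m.succ = 0 then 1 else 0) = k) := by
      simp; omega
    rw [if_congr this rfl rfl]
    simp [mul_ite]
  · have : ((if (1:Fin 2) = 0 then 1 else 0) + (∑ m : Fin n, if y m.succ = 0 then 1 else 0) = k + 1)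
        ↔ ((∑ m : Fin n, if y m.succ = 0 then 1 else 0) = k + 1) := by
      simp
    rw [if_congr this rfl rfl]
    simp [mul_ite]

lemma P00 (p q : ℝ) : twoStateP p q 0 0 = 1 - p := by simp [twoStateP]
lemma P01 (p q : ℝ) : twoStateP p q 0 1 = p := by simp [twoStateP]
lemma P10 (p q : ℝ) : twoStateP p q 1 0 = q := by simp [twoStateP]
lemma P11 (p q : ℝ) : twoStateP p q 1 1 = 1 - q := by simp [twoStateP]

lemma P_nonneg {p q : ℝ} (hp : p ∈ Set.Ioo (0:ℝ) 1) (hq : q ∈ Set.Ioo (0:ℝ) 1)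
    (i j : Fin 2) : 0 ≤ twoStateP p q i j := by
  obtain ⟨hp0, hp1⟩ := hp; obtain ⟨hq0, hq1⟩ := hq
  fin_cases i <;> fin_cases j <;> simp [twoStateP] <;> linarith

lemma P_row (p q : ℝ) (i : Fin 2) : twoStateP p q i 0 + twoStateP p q i 1 = 1 := by
  fin_cases i <;> simp [twoStateP]

lemma g2_zero (p q : ℝ) (i : Fin 2) (k : ℕ) :
    g2 p q i 0 k = if k = 0 then 1 else 0 := by
  rw [g2_eq]
  rw [← Equiv.sum_comp (Equiv.funUnique (Fin 1) (Fin 2)).symm]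
  simp only [Equiv.funUnique_symm_apply, Finset.univ_unique, Fin.sum_univ_two]
  have hi : i = 0 ∨ i = 1 := by omega
  rcases hi with hi | hi <;> subst hi <;> by_cases hk : k = 0 <;>
    simp [hk, eq_comm]

lemma g2_nonneg {p q : ℝ} (hp : p ∈ Set.Ioo (0:ℝ) 1) (hq : q ∈ Set.Ioo (0:ℝ) 1)
    (i : Fin 2) (n k : ℕ) : 0 ≤ g2 p q i n k := by
  apply Finset.sum_nonneg
  intro x _
  exact Finset.prod_nonneg fun m _ => P_nonneg hp hq _ _

lemma g2_le_one {p q : ℝ} (hp : p ∈ Set.Ioo (0:ℝ) 1) (hq : q ∈ Set.Ioo (0:ℝ) 1)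
    (i : Fin 2) (n k : ℕ) : g2 p q i n k ≤ 1 := by
  induction n generalizing i k with
  | zero => rw [g2_zero]; split <;> norm_num
  | succ n ih =>
    have h0 := P_nonneg hp hq i 0
    have h1 := P_nonneg hp hq i 1
    have hrow := P_row p q i
    cases k with
    | zero =>
      rw [g2_succ_zero]
      nlinarith [ih 1 0, g2_nonneg hp hq 1 n 0]
    | succ k' =>
      rw [g2_succ_succ]
      nlinarith [ih 0 k', ih 1 (k'+1), g2_nonneg hp hq 0 n k', g2_nonneg hp hq 1 n (k'+1)]

lemma g2_eq_zero_of_lt (p q : ℝ) (i : Fin 2) {n k : ℕ} (h : n < k) :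
    g2 p q i n k = 0 := by
  apply Finset.sum_eq_zero
  intro x hx
  simp only [Finset.mem_filter] at hx
  exfalso
  have hle := Finset.card_filter_le (Finset.univ : Finset (Fin n))
      (fun m : Fin n => x m.succ = 0)
  rw [hx.2.2] at hle
  simp only [Finset.card_univ, Fintype.card_fin] at hle
  omega

lemma g2_summable {p q : ℝ} (hp : p ∈ Set.Ioo (0:ℝ) 1) (hq : q ∈ Set.Ioo (0:ℝ) 1)
    {t : ℝ} (ht : |t| < 1) (i : Fin 2) (m k : ℕ) :
    Summable (fun n : ℕ => g2 p q i (n + m) k * t ^ n) := by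
  apply Summable.of_norm_bounded (g := fun n => |t| ^ n)
    (summable_geometric_of_lt_one (abs_nonneg t) ht)
  intro n
  rw [norm_mul, Real.norm_eq_abs, Real.norm_eq_abs, abs_pow,
    abs_of_nonneg (g2_nonneg hp hq _ _ _)]
  calc g2 p q i (n + m) k * |t| ^ n ≤ 1 * |t| ^ n := by
        exact mul_le_mul_of_nonneg_right (g2_le_one hp hq _ _ _)
          (pow_nonneg (abs_nonneg t) n)
    _ = |t| ^ n := one_mul _

theorem stmt12 (p q : ℝ) (hp : p ∈ Set.Ioo (0 : ℝ) 1) (hq : q ∈ Set.Ioo (0 : ℝ) 1)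
    (r : ℝ) (hr : r = 1 - p - q) (t : ℝ) (ht : |t| < 1) (k : ℕ) (hk : 1 ≤ k) :
    Summable (fun n : ℕ => g2 p q 0 (n + k) k * t ^ n) ∧
    Summable (fun n : ℕ => g2 p q 1 (n + k) k * t ^ n) ∧
    (∑' n : ℕ, g2 p q 0 (n + k) k * t ^ n) =
      (1 - r * t) * (1 - p - r * t) ^ k / (1 - (1 - q) * t) ^ (k + 1) ∧
    (∑' n : ℕ, g2 p q 1 (n + k) k * t ^ n) =
      q * (1 - r * t) * (1 - p - r * t) ^ (k - 1) / (1 - (1 - q) * t) ^ (k + 1) := by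
  subst hr
  have habs := abs_lt.mp ht
  have hD0 : 0 < 1 - (1 - q) * t := by nlinarith [hq.1, hq.2, habs.1, habs.2]
  have hD : (1 - (1 - q) * t) ≠ 0 := ne_of_gt hD0
  have hD' : 1 - t * (1 - q) ≠ 0 := by rwa [mul_comm] at hD
  -- shift identity
  have hshift : ∀ (i : Fin 2) (k' : ℕ),
      (∑' n : ℕ, g2 p q i (n + k') (k' + 1) * t ^ n)
        = t * ∑' n : ℕ, g2 p q i (n + (k' + 1)) (k' + 1) * t ^ n := by
    intro i k'
    rw [Summable.tsum_eq_zero_add (g2_summable hp hq ht i k' (k' + 1))]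
    rw [g2_eq_zero_of_lt p q i (show 0 + k' < k' + 1 by omega)]
    rw [zero_mul, zero_add, ← tsum_mul_left]
    apply tsum_congr
    intro n
    rw [show n + 1 + k' = n + (k' + 1) from by ring]
    ring
  -- base equations
  have hB0 : (∑' n : ℕ, g2 p q 1 (n + 0) 0 * t ^ n)
      = 1 + (1 - q) * (t * ∑' n : ℕ, g2 p q 1 (n + 0) 0 * t ^ n) := by
    conv_lhs => rw [Summable.tsum_eq_zero_add (g2_summable hp hq ht 1 0 0)]
    rw [show g2 p q 1 (0 + 0) 0 = 1 from by rw [g2_zero]; simp]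
    rw [pow_zero, one_mul]
    congr 1
    calc (∑' n : ℕ, g2 p q 1 (n + 1 + 0) 0 * t ^ (n + 1))
        = ∑' n : ℕ, (1 - q) * (t * (g2 p q 1 (n + 0) 0 * t ^ n)) := by
          apply tsum_congr; intro n
          rw [show n + 1 + 0 = (n + 0) + 1 from by ring, g2_succ_zero, P11]
          ring
      _ = (1 - q) * (t * ∑' n : ℕ, g2 p q 1 (n + 0) 0 * t ^ n) := by
          rw [tsum_mul_left, tsum_mul_left]
  have hA0 : (∑' n : ℕ, g2 p q 0 (n + 0) 0 * t ^ n)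
      = 1 + p * (t * ∑' n : ℕ, g2 p q 1 (n + 0) 0 * t ^ n) := by
    rw [Summable.tsum_eq_zero_add (g2_summable hp hq ht 0 0 0)]
    rw [show g2 p q 0 (0 + 0) 0 = 1 from by rw [g2_zero]; simp]
    rw [pow_zero, one_mul]
    congr 1
    calc (∑' n : ℕ, g2 p q 0 (n + 1 + 0) 0 * t ^ (n + 1))
        = ∑' n : ℕ, p * (t * (g2 p q 1 (n + 0) 0 * t ^ n)) := by
          apply tsum_congr; intro n
          rw [show n + 1 + 0 = (n + 0) + 1 from by ring, g2_succ_zero, P01]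
          ring
      _ = p * (t * ∑' n : ℕ, g2 p q 1 (n + 0) 0 * t ^ n) := by
          rw [tsum_mul_left, tsum_mul_left]
  -- recurrences
  have hBrec : ∀ k' : ℕ,
      (∑' n : ℕ, g2 p q 1 (n + (k' + 1)) (k' + 1) * t ^ n)
        = q * (∑' n : ℕ, g2 p q 0 (n + k') k' * t ^ n)
          + (1 - q) * (t * ∑' n : ℕ, g2 p q 1 (n + (k' + 1)) (k' + 1) * t ^ n) := by
    intro k'
    calc (∑' n : ℕ, g2 p q 1 (n + (k' + 1)) (k' + 1) * t ^ n)
        = ∑' n : ℕ, (q * (g2 p q 0 (n + k') k' * t ^ n)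
            + (1 - q) * (g2 p q 1 (n + k') (k' + 1) * t ^ n)) := by
          apply tsum_congr; intro n
          rw [show n + (k' + 1) = (n + k') + 1 from by ring, g2_succ_succ, P10, P11]
          ring
      _ = q * (∑' n : ℕ, g2 p q 0 (n + k') k' * t ^ n)
          + (1 - q) * (∑' n : ℕ, g2 p q 1 (n + k') (k' + 1) * t ^ n) := by
          rw [Summable.tsum_add ((g2_summable hp hq ht 0 k' k').mul_left q)
            ((g2_summable hp hq ht 1 k' (k' + 1)).mul_left (1 - q)),
            tsum_mul_left, tsum_mul_left]
      _ = q * (∑' n : ℕ, g2 p q 0 (n + k') k' * t ^ n)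
          + (1 - q) * (t * ∑' n : ℕ, g2 p q 1 (n + (k' + 1)) (k' + 1) * t ^ n) := by
          rw [hshift 1 k']
  have hArec : ∀ k' : ℕ,
      (∑' n : ℕ, g2 p q 0 (n + (k' + 1)) (k' + 1) * t ^ n)
        = (1 - p) * (∑' n : ℕ, g2 p q 0 (n + k') k' * t ^ n)
          + p * (t * ∑' n : ℕ, g2 p q 1 (n + (k' + 1)) (k' + 1) * t ^ n) := by
    intro k'
    calc (∑' n : ℕ, g2 p q 0 (n + (k' + 1)) (k' + 1) * t ^ n)
        = ∑' n : ℕ, ((1 - p) * (g2 p q 0 (n + k') k' * t ^ n)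
            + p * (g2 p q 1 (n + k') (k' + 1) * t ^ n)) := by
          apply tsum_congr; intro n
          rw [show n + (k' + 1) = (n + k') + 1 from by ring, g2_succ_succ, P00, P01]
          ring
      _ = (1 - p) * (∑' n : ℕ, g2 p q 0 (n + k') k' * t ^ n)
          + p * (∑' n : ℕ, g2 p q 1 (n + k') (k' + 1) * t ^ n) := by
          rw [Summable.tsum_add ((g2_summable hp hq ht 0 k' k').mul_left (1 - p))
            ((g2_summable hp hq ht 1 k' (k' + 1)).mul_left p),
            tsum_mul_left, tsum_mul_left]
      _ = (1 - p) * (∑' n : ℕ, g2 p q 0 (n + k') k' * t ^ n)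
          + p * (t * ∑' n : ℕ, g2 p q 1 (n + (k' + 1)) (k' + 1) * t ^ n) := by
          rw [hshift 1 k']
  -- solve for B
  have hBsol : ∀ k' : ℕ,
      (∑' n : ℕ, g2 p q 1 (n + (k' + 1)) (k' + 1) * t ^ n)
        = q * (∑' n : ℕ, g2 p q 0 (n + k') k' * t ^ n) / (1 - (1 - q) * t) := by
    intro k'
    rw [eq_div_iff hD]
    linear_combination hBrec k'
  have hB0sol : (∑' n : ℕ, g2 p q 1 (n + 0) 0 * t ^ n) = 1 / (1 - (1 - q) * t) := by
    rw [eq_div_iff hD]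
    linear_combination hB0
  -- closed form for A
  have hAform : ∀ k' : ℕ,
      (∑' n : ℕ, g2 p q 0 (n + k') k' * t ^ n)
        = (1 - (1 - p - q) * t) * (1 - p - (1 - p - q) * t) ^ k'
            / (1 - (1 - q) * t) ^ (k' + 1) := by
    intro k'
    induction k' with
    | zero =>
      rw [hA0, hB0sol, pow_zero, zero_add, pow_one]
      field_simp
      ring
    | succ m ih =>
      rw [hArec m, hBsol m, ih]
      rw [pow_succ (1 - (1 - q) * t) (m + 1), pow_succ (1 - p - (1 - p - q) * t) m]
      field_simp
      ring
  obtain ⟨k', rfl⟩ : ∃ k', k = k' + 1 := ⟨k - 1, by omega⟩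
  refine ⟨g2_summable hp hq ht 0 (k' + 1) (k' + 1),
    g2_summable hp hq ht 1 (k' + 1) (k' + 1), hAform (k' + 1), ?_⟩
  rw [hBsol k', hAform k']
  rw [show k' + 1 - 1 = k' from rfl]
  rw [show k' + 1 + 1 = k' + 2 from rfl, pow_succ (1 - (1 - q) * t) (k' + 1)]
  field_simp
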